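/- arXiv:2205.09736 — 5 statements merged into one kernel-verified Lean document; each statement's English description precedes it below -/
import Mathlib

section
/- Let X be an n×(k+1) matrix with full column rank. Appending a row v to X to form X' satisfies: the map v ↦ det(X'ᵀX') is maximized over a finite set S ⊆ ℝ^{k+1} at exactly those v ∈ S maximizing vᵀ(XᵀX)⁻¹v. -/
/-!
Appending the row `v` adds the rank-one term `v vᵀ` to the Gram matrix, so by the matrix
determinant lemma `det (X'ᵀX') = det (XᵀX) * (1 + vᵀ (XᵀX)⁻¹ v)`. Full column rank makes `XᵀX`
positive definite, so `det (XᵀX) > 0` and the determinant is a strictly increasing function of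
the quadratic form: both have the same maximisers on any set.
-/

open Matrix

/-- The matrix obtained by appending the row `v` to the `n × p` matrix `X`. -/
def appendRow {n p : ℕ} (X : Matrix (Fin n) (Fin p) ℝ) (v : Fin p → ℝ) :
    Matrix (Fin (n+1)) (Fin p) ℝ :=
  Matrix.of (Fin.snoc (fun i => X i) v)

namespace Matrix

theorem mulVec_injective_of_rank_eq_card {K m n : Type*} [Field K] [Fintype m] [Fintype n]
    {A : Matrix m n K} (hA : A.rank = Fintype.card n) : Function.Injective A.mulVec := by
  rw [mulVec_injective_iff, linearIndependent_iff_card_eq_finrank_span, ← hA,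
    rank_eq_finrank_span_cols, Set.finrank]

theorem posDef_transpose_mul_self_of_rank_eq_card {m n : Type*} [Fintype m] [Fintype n]
    {A : Matrix m n ℝ} (hA : A.rank = Fintype.card n) : (Aᵀ * A).PosDef := by
  simpa using PosDef.conjTranspose_mul_self A (mulVec_injective_of_rank_eq_card hA)

theorem det_add_vecMulVec {R n : Type*} [CommRing R] [Fintype n] [DecidableEq n]
    {A : Matrix n n R} (hA : IsUnit A.det) (u v : n → R) :
    (A + vecMulVec u v).det = A.det * (1 + v ⬝ᵥ (A⁻¹ *ᵥ u)) := by
  rw [vecMulVec_eq Unit, det_add_replicateCol_mul_replicateRow hA, Matrix.mul_assoc,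
    ← replicateCol_mulVec, det_unique (n := Unit)]
  simp

end Matrix

theorem appendRow_transpose_mul_self {n p : ℕ} (X : Matrix (Fin n) (Fin p) ℝ) (v : Fin p → ℝ) :
    (appendRow X v)ᵀ * appendRow X v = Xᵀ * X + vecMulVec v v := by
  ext i j
  simp [mul_apply, vecMulVec_apply, appendRow, Fin.sum_univ_castSucc]

theorem det_appendRow_transpose_mul_self {n p : ℕ} {X : Matrix (Fin n) (Fin p) ℝ}
    (hX : IsUnit (Xᵀ * X).det) (v : Fin p → ℝ) :
    ((appendRow X v)ᵀ * appendRow X v).det = (Xᵀ * X).det * (1 + v ⬝ᵥ ((Xᵀ * X)⁻¹ *ᵥ v)) := by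
  rw [appendRow_transpose_mul_self, det_add_vecMulVec hX]

theorem dopt_argmax_characterization_general (n k : ℕ) (X : Matrix (Fin n) (Fin (k+1)) ℝ)
    (hX : X.rank = k + 1) (S : Finset (Fin (k+1) → ℝ))
    (v : Fin (k+1) → ℝ) :
    (∀ w ∈ S, ((appendRow X w)ᵀ * appendRow X w).det
        ≤ ((appendRow X v)ᵀ * appendRow X v).det)
      ↔ (∀ w ∈ S, w ⬝ᵥ ((Xᵀ * X)⁻¹ *ᵥ w) ≤ v ⬝ᵥ ((Xᵀ * X)⁻¹ *ᵥ v)) := by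
  have hdet : 0 < (Xᵀ * X).det :=
    (posDef_transpose_mul_self_of_rank_eq_card (by simpa using hX)).det_pos
  refine forall₂_congr fun w _ => ?_
  simp only [det_appendRow_transpose_mul_self hdet.ne'.isUnit, mul_le_mul_iff_right₀ hdet,
    add_le_add_iff_left]

theorem dopt_argmax_characterization (n k : ℕ) (X : Matrix (Fin n) (Fin (k+1)) ℝ)
    (hX : X.rank = k + 1) (S : Finset (Fin (k+1) → ℝ)) (hS : S.Nonempty)
    (v : Fin (k+1) → ℝ) (hv : v ∈ S) :
    (∀ w ∈ S, ((appendRow X w)ᵀ * appendRow X w).det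
        ≤ ((appendRow X v)ᵀ * appendRow X v).det)
      ↔ (∀ w ∈ S, w ⬝ᵥ ((Xᵀ * X)⁻¹ *ᵥ w) ≤ v ⬝ᵥ ((Xᵀ * X)⁻¹ *ᵥ v)) :=
  dopt_argmax_characterization_general n k X hX S v
end

section
/- Let X̃ be an N×(k+1) full-column-rank design matrix with first column all ones, and suppose x̄* ∈ ℝ^k and G̃ is a matrix satisfying (1, x̄*ᵀ)ᵀ = (1/(1+ε)) G̃ᵀG̃ e₁ where e₁ is the first standard basis vector and G̃ᵀG̃ is invertible. Then for every x ∈ ℝ^k: (1, xᵀ)(G̃ᵀG̃)⁻¹(1, xᵀ)ᵀ = 1/(1+ε) + (0, (x − x̄*)ᵀ)(G̃ᵀG̃)⁻¹(0, (x − x̄*)ᵀ)ᵀ. -/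
open Matrix

theorem ridge_augmented_decomposition (N mdim k : ℕ) (ε : ℝ) (hε : 0 < ε)
    (Xt : Matrix (Fin N) (Fin (k+1)) ℝ)
    (hcol : ∀ i, Xt i 0 = 1) (hrank : Xt.rank = k + 1)
    (Gt : Matrix (Fin mdim) (Fin (k+1)) ℝ) (hinv : IsUnit (Gtᵀ * Gt).det)
    (xbar : Fin k → ℝ)
    (hbar : (Fin.cons (1 : ℝ) xbar : Fin (k+1) → ℝ)
      = (1 / (1 + ε)) • ((Gtᵀ * Gt) *ᵥ (Pi.single 0 1)))
    (x : Fin k → ℝ) :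
    (Fin.cons (1 : ℝ) x) ⬝ᵥ ((Gtᵀ * Gt)⁻¹ *ᵥ (Fin.cons (1 : ℝ) x))
      = 1 / (1 + ε)
        + (Fin.cons (0 : ℝ) (x - xbar)) ⬝ᵥ
            ((Gtᵀ * Gt)⁻¹ *ᵥ (Fin.cons (0 : ℝ) (x - xbar))) := by
  set A := Gtᵀ * Gt with hA
  set c : ℝ := 1 / (1 + ε) with hc
  set v : Fin (k+1) → ℝ := Fin.cons 1 xbar with hvdef
  set w : Fin (k+1) → ℝ := Fin.cons 0 (x - xbar) with hwdef
  have hAsymm : Aᵀ = A := by rw [hA, transpose_mul, transpose_transpose]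
  have hAinvsymm : (A⁻¹)ᵀ = A⁻¹ := by rw [transpose_nonsing_inv, hAsymm]
  have hv : A⁻¹ *ᵥ v = c • (Pi.single 0 1 : Fin (k+1) → ℝ) := by
    rw [hbar, mulVec_smul, mulVec_mulVec, nonsing_inv_mul A hinv, one_mulVec]
  have hw0 : w 0 = 0 := rfl
  have hu : (Fin.cons (1 : ℝ) x : Fin (k+1) → ℝ) = v + w := by
    funext i
    refine Fin.cases ?_ (fun j => ?_) i <;> simp [hvdef, hwdef]
  have hvv : v ⬝ᵥ (A⁻¹ *ᵥ v) = c := by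
    rw [hv, dotProduct_smul, dotProduct_single]
    simp [hvdef]
  have hwv : w ⬝ᵥ (A⁻¹ *ᵥ v) = 0 := by
    rw [hv, dotProduct_smul, dotProduct_single, hw0]
    simp
  have hvw : v ⬝ᵥ (A⁻¹ *ᵥ w) = 0 := by
    rw [dotProduct_mulVec, ← mulVec_transpose, hAinvsymm, ← hwv,
      dotProduct_comm]
  rw [hu, mulVec_add, add_dotProduct, dotProduct_add, dotProduct_add,
    hvv, hwv, hvw]
  ring
end

section
/- In the SCOMARS algorithm for two groups, the sequentially controlled property holds: the process (S_r) defined by S_r = Σ_{j≤r} W_j with conditional law P(W_r = 1 | S_{r-1} = s) = (p_r − max(0, s − F_{r-1}))/(1 − |s − F_{r-1}|) (where F_r = Σ_{j≤r} p_j, p_j ∈ [0,1], and the previous deviations satisfy |s − F_{r-1}| < 1) satisfies |S_r − F_r| < 1 almost surely for all r, provided F_N ∈ ℤ and each update probability lies in [0,1]. -/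
theorem scomars_sequentially_controlled (N : ℕ) (p : ℕ → ℝ)
    (hp : ∀ r < N, p r ∈ Set.Icc (0 : ℝ) 1)
    (w : ℕ → ℕ) (hw : ∀ r < N, w r = 0 ∨ w r = 1)
    (S F : ℕ → ℝ)
    (hS : ∀ r, S r = ∑ j ∈ Finset.range r, (w j : ℝ))
    (hF : ∀ r, F r = ∑ j ∈ Finset.range r, p j)
    (q : ℕ → ℝ)
    (hq : ∀ r, q r = (p r - max 0 (S r - F r)) / (1 - |S r - F r|))
    (hq01 : ∀ r < N, q r ∈ Set.Icc (0 : ℝ) 1)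
    (hsupp1 : ∀ r < N, w r = 1 → 0 < q r)
    (hsupp0 : ∀ r < N, w r = 0 → q r < 1)
    (hFN : ∃ z : ℤ, F N = (z : ℝ)) :
    ∀ r ≤ N, |S r - F r| < 1 := by
  intro r
  induction r with
  | zero =>
    intro _
    simp [hS, hF]
  | succ r ih =>
    intro hrN
    have hrN' : r < N := hrN
    have ihr : |S r - F r| < 1 := ih (le_of_lt hrN')
    have hden : 0 < 1 - |S r - F r| := by linarith
    have hstep : S (r + 1) - F (r + 1) = (S r - F r) + ((w r : ℝ) - p r) := by
      rw [hS, hS, hF, hF, Finset.sum_range_succ, Finset.sum_range_succ]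
      ring
    set d := S r - F r with hd
    have hdlt : d < 1 := lt_of_abs_lt ihr
    have hdgt : -1 < d := neg_lt_of_abs_lt ihr
    have hpr := hp r hrN'
    rcases hw r hrN' with hw0 | hw1
    · -- w r = 0
      have hq1 : q r < 1 := hsupp0 r hrN' hw0
      rw [hq] at hq1
      have hnum : p r - max 0 d < 1 - |d| := by
        have := (div_lt_one hden).mp hq1
        linarith
      have hpub : p r < 1 + d := by
        rcases le_or_gt 0 d with h | h
        · rw [abs_of_nonneg h, max_eq_right h] at hnum; linarith
        · rw [abs_of_neg h, max_eq_left h.le] at hnum; linarith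
      rw [hstep, hw0]
      rw [abs_lt]
      constructor <;> push_cast <;> [linarith [hpr.1]; linarith [hpr.1]]
    · -- w r = 1
      have hq0 : 0 < q r := hsupp1 r hrN' hw1
      rw [hq] at hq0
      have hnum : 0 < p r - max 0 d := by
        by_contra h
        push_neg at h
        have : (p r - max 0 d) / (1 - |d|) ≤ 0 := div_nonpos_of_nonpos_of_nonneg h hden.le
        linarith
      have hdlt' : d < p r := lt_of_le_of_lt (le_max_right 0 d) (by linarith)
      rw [hstep, hw1]
      rw [abs_lt]
      constructor <;> push_cast <;> [linarith [hpr.2]; linarith [hpr.2]]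
end

section
/- In the three-stage SOM algorithm of Theorem A2 (SCOMARS between group 1 of size n₁ and a supergroup of size (G−1)n', followed by randomized chunk within the supergroup), the deviation for any group g ∈ {2,...,G} satisfies |S_{ig} − F_{ig}| < 1 for all stages i, where F_{ig} = i·n'/N, given that SCOMARS guarantees |S_{i1} − i·n₁/N| < 1 and randomized chunk within the supergroup guarantees deviations at most (G−2)/(G−1). -/
theorem three_stage_som_sequentially_controlled (N n₁ n' G : ℕ) (hG : 2 ≤ G)
    (hN : N = n₁ + (G - 1) * n') (hNpos : 0 < N)
    (t S : ℕ → ℕ) (ht : ∀ i ≤ N, t i ≤ i)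
    (h1 : ∀ i ≤ N, |(t i : ℝ) - (i : ℝ) * n₁ / N| < 1)
    (h2 : ∀ i ≤ N,
      |(S i : ℝ) - ((i : ℝ) - t i) / ((G : ℝ) - 1)| ≤ ((G : ℝ) - 2) / ((G : ℝ) - 1)) :
    ∀ i ≤ N, |(S i : ℝ) - (i : ℝ) * n' / N| < 1 := by
  intro i hi
  have hG1 : (1 : ℝ) ≤ (G : ℝ) - 1 := by
    have : (2 : ℝ) ≤ (G : ℝ) := by exact_mod_cast hG
    linarith
  have hG1pos : (0 : ℝ) < (G : ℝ) - 1 := by linarith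
  have hNr : (N : ℝ) = (n₁ : ℝ) + ((G : ℝ) - 1) * (n' : ℝ) := by
    have h' : ((G : ℕ) - 1 : ℕ) = G - 1 := rfl
    have hcast : (((G - 1 : ℕ)) : ℝ) = (G : ℝ) - 1 := by
      have : 1 ≤ G := le_trans (by norm_num) hG
      push_cast [Nat.cast_sub this]
      ring
    rw [hN]
    push_cast [hcast]
    ring
  have hN0 : (N : ℝ) ≠ 0 := by exact_mod_cast hNpos.ne'
  have hkey : (i : ℝ) * n' / N = ((i : ℝ) - (i : ℝ) * n₁ / N) / ((G : ℝ) - 1) := by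
    field_simp
    rw [hNr]; ring
  have h2i := h2 i hi
  have h1i := h1 i hi
  have habs : |((i : ℝ) - t i) / ((G : ℝ) - 1) - (i : ℝ) * n' / N|
      = |(t i : ℝ) - (i : ℝ) * n₁ / N| / ((G : ℝ) - 1) := by
    rw [hkey, div_sub_div_same, abs_div, abs_of_pos hG1pos]
    congr 1
    rw [show (i : ℝ) - t i - ((i : ℝ) - (i : ℝ) * n₁ / N) = -((t i : ℝ) - (i : ℝ) * n₁ / N) by ring,
      abs_neg]
  have htri : |(S i : ℝ) - (i : ℝ) * n' / N|
      ≤ |(S i : ℝ) - ((i : ℝ) - t i) / ((G : ℝ) - 1)|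
        + |((i : ℝ) - t i) / ((G : ℝ) - 1) - (i : ℝ) * n' / N| := by
    exact abs_sub_le _ _ _
  have h1' : |(t i : ℝ) - (i : ℝ) * n₁ / N| / ((G : ℝ) - 1) < 1 / ((G : ℝ) - 1) :=
    by gcongr
  have hsum : ((G : ℝ) - 2) / ((G : ℝ) - 1) + 1 / ((G : ℝ) - 1) = 1 := by
    field_simp
    ring
  rw [habs] at htri
  linarith
end

section
/- In the SCOMARS chain with equal fair shares p_r = 1/G for the first group among G equal groups of size n (N = nG), conditional on S_{r-1} = 0 for r ≤ G, the probability of selection at stage r is 1/(G−r+1); conditional on S_{r-1} = 1 for r ≤ G, the probability of selection at stage r is 0; and P(W_G = 1 | S_{G-1} = 0) = 1. Hence within the first G stages the group selects exactly once, uniformly at random among the G positions. -/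
/-!
At stage `r ≤ G` the cumulative fair share before the stage is `F = (r - 1)/G`. A group not yet
selected is then selected with probability `(1/G)/(1 - F) = 1/(G - r + 1)`, while an already
selected group has `F + 1/G ≤ 1` and is never selected again. Reaching stage `r` unselected
has probability `∏_{j < r} (1 - 1/(G - j + 1)) = (G - r + 1)/G` by telescoping, so the single
selection lands at stage `r` with probability `1/G`.
-/

open Finset

/-- The SCOMARS rule `P(W_r = 1 | S_{r-1} = s)` with fair share `p = p_r` and `F = F_{r-1}`. -/
noncomputable def scomarsCondProb (p F s : ℝ) : ℝ :=
  (p - max 0 (s - F)) / (1 - |s - F|)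

theorem scomarsCondProb_zero {p F : ℝ} (hF : 0 ≤ F) :
    scomarsCondProb p F 0 = p / (1 - F) := by
  rw [scomarsCondProb, zero_sub, max_eq_left (neg_nonpos.mpr hF), abs_neg, abs_of_nonneg hF,
    sub_zero]

theorem scomarsCondProb_one_nonpos {p F : ℝ} (hp : 0 ≤ p) (hF : 0 ≤ F) (hpF : p + F ≤ 1) :
    scomarsCondProb p F 1 ≤ 0 := by
  have h1F : 0 ≤ 1 - F := by linarith
  rw [scomarsCondProb, max_eq_right h1F, abs_of_nonneg h1F, sub_sub_cancel]
  exact div_nonpos_of_nonpos_of_nonneg (by linarith) hF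

theorem prod_Icc_one_sub_one_div {G : ℝ} :
    ∀ m : ℕ, (m : ℝ) < G → ∏ j ∈ Icc 1 m, (1 - 1 / (G - j + 1)) = (G - m) / G
  | 0, hG => by simp [div_self (Nat.cast_zero (R := ℝ) ▸ hG).ne']
  | m + 1, hm => by
    push_cast at hm
    have hGm : G - m ≠ 0 := by linarith
    have hG : G ≠ 0 := by linarith [m.cast_nonneg (α := ℝ)]
    rw [prod_Icc_succ_top (by omega), prod_Icc_one_sub_one_div m (by linarith),
      show G - (m + 1 : ℕ) + 1 = G - m by push_cast; ring]
    field_simp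
    push_cast
    ring

theorem scomars_uniform_first_selection (G : ℕ) (hG : 2 ≤ G)
    (q0 q1 : ℕ → ℝ)
    (hq0 : ∀ r : ℕ, q0 r
      = ((1 : ℝ) / G - max 0 ((0 : ℝ) - ((r : ℝ) - 1) / G))
          / (1 - |(0 : ℝ) - ((r : ℝ) - 1) / G|))
    (hq1 : ∀ r : ℕ, q1 r
      = ((1 : ℝ) / G - max 0 ((1 : ℝ) - ((r : ℝ) - 1) / G))
          / (1 - |(1 : ℝ) - ((r : ℝ) - 1) / G|))
    (selProb : ℝ → ℝ) (hsel : ∀ x, selProb x = max 0 (min 1 x)) :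
    (∀ r : ℕ, 1 ≤ r → r ≤ G → selProb (q0 r) = 1 / ((G : ℝ) - r + 1))
    ∧ (∀ r : ℕ, 2 ≤ r → r ≤ G → selProb (q1 r) = 0)
    ∧ selProb (q0 G) = 1
    ∧ (∀ r : ℕ, 1 ≤ r → r ≤ G →
        (∏ j ∈ Finset.Icc 1 (r - 1), (1 - selProb (q0 j))) * selProb (q0 r)
          = 1 / G) := by
  have hG0 : (0 : ℝ) < G := by exact_mod_cast (by omega : 0 < G)
  have hF0 : ∀ r : ℕ, 1 ≤ r → 0 ≤ ((r : ℝ) - 1) / G := fun r hr =>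
    div_nonneg (by simp [hr]) hG0.le
  have sel0 : ∀ r : ℕ, 1 ≤ r → r ≤ G → selProb (q0 r) = 1 / ((G : ℝ) - r + 1) := by
    intro r h1 h2
    have hrG : (r : ℝ) ≤ G := by exact_mod_cast h2
    have hq : q0 r = 1 / ((G : ℝ) - r + 1) := by
      rw [show q0 r = scomarsCondProb (1 / G) ((r - 1) / G) 0 from hq0 r,
        scomarsCondProb_zero (hF0 r h1)]
      field_simp
      ring
    rw [hsel, hq, min_eq_right ((div_le_one (by linarith)).mpr (by linarith)),
      max_eq_right (by positivity)]
  refine ⟨sel0, fun r h2 hr => ?_, by simpa using sel0 G (by omega) le_rfl, fun r h1 hr => ?_⟩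
  · have hq : q1 r ≤ 0 := by
      rw [show q1 r = scomarsCondProb (1 / G) ((r - 1) / G) 1 from hq1 r]
      refine scomarsCondProb_one_nonpos (by positivity) (hF0 r (by omega)) ?_
      rw [← add_div, div_le_one hG0]
      have : (r : ℝ) ≤ G := by exact_mod_cast hr
      linarith
    rw [hsel, max_eq_left ((min_le_right _ _).trans hq)]
  · obtain ⟨m, rfl⟩ : ∃ m, r = m + 1 := ⟨r - 1, by omega⟩
    have hmG : (m : ℝ) < G := by exact_mod_cast hr
    have hsurvive : ∀ j ∈ Icc 1 m, 1 - selProb (q0 j) = 1 - 1 / ((G : ℝ) - j + 1) := by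
      intro j hj
      have := mem_Icc.mp hj
      rw [sel0 j this.1 (by omega)]
    rw [Nat.add_sub_cancel, prod_congr rfl hsurvive, prod_Icc_one_sub_one_div m hmG,
      sel0 _ h1 hr]
    have : (G : ℝ) - m ≠ 0 := by linarith
    rw [show (G : ℝ) - (m + 1 : ℕ) + 1 = G - m by push_cast; ring]
    field_simp
end
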